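/- Let $n\geq 2$ and $\tilde f(y) = -\tfrac{1}{4}\ln y_1 + \sum_{k=2}^n \tfrac{y_k^2}{2y_1}$ on $\{y_1 > 0\}$. With $\tilde D = \det(\mathrm{Hess}\,\tilde f)$ and $(\tilde f^{ij})$ the inverse Hessian, for any real $a \neq 0$ one has $\sum_{i,j} \tilde f^{ij}\, \partial_i\partial_j(\tilde D^a) = 0$ on the domain if and only if $a = -\tfrac{1}{n+1}$. -/

import Mathlib

open Real Finset Matrix


noncomputable section

/-- `f̃(y) = -(1/4) ln y₁ + ∑_{k=2}^n y_k²/(2 y₁)` (index `0` plays the role of `1`). -/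
def tf (n : ℕ) [NeZero n] (y : Fin n → ℝ) : ℝ :=
  -(1/4) * Real.log (y 0) + ∑ k ∈ Finset.univ \ {0}, (y k) ^ 2 / (2 * y 0)

/-- Partial derivative in the `i`-th coordinate direction. -/
def pd (n : ℕ) (i : Fin n) (h : (Fin n → ℝ) → ℝ) : (Fin n → ℝ) → ℝ :=
  fun x => fderiv ℝ h x (Pi.single i 1)

/-- The Hessian matrix `(∂²h/∂xᵢ∂xⱼ)`. -/
def Hess (n : ℕ) (h : (Fin n → ℝ) → ℝ) (x : Fin n → ℝ) : Matrix (Fin n) (Fin n) ℝ :=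
  fun i j => pd n i (pd n j h) x

section Aux

variable {n : ℕ} [NeZero n]

abbrev prj (k : Fin n) : (Fin n → ℝ) →L[ℝ] ℝ := ContinuousLinearMap.proj k

lemma hP (y : Fin n → ℝ) (k : Fin n) : HasFDerivAt (fun z : Fin n → ℝ => z k) (prj k) y :=
  (prj k).hasFDerivAt

lemma tf_hasFDerivAt (y : Fin n → ℝ) (hy : 0 < y 0) :
    HasFDerivAt (tf n)
      ((-(1/4) : ℝ) • (((y 0)⁻¹ : ℝ) • prj 0) +
        ∑ k ∈ univ \ {0},
          ((y k ^ 2) • ((-(2 * 1) / (2 * y 0) ^ 2) • prj 0)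
            + ((2 * y 0)⁻¹) • (((2:ℕ) * y k ^ (2-1)) • prj k))) y := by
  have hy0 : y 0 ≠ 0 := hy.ne'
  have h1 : HasFDerivAt (fun z : Fin n → ℝ => -(1/4) * Real.log (z 0))
      ((-(1/4) : ℝ) • (((y 0)⁻¹ : ℝ) • prj 0)) y :=
    HasFDerivAt.const_mul ((Real.hasDerivAt_log hy0).comp_hasFDerivAt y (hP y 0)) _
  have h2 : ∀ k ∈ univ \ ({0} : Finset (Fin n)),
      HasFDerivAt (fun z : Fin n → ℝ => (z k) ^ 2 * (2 * z 0)⁻¹)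
        ((y k ^ 2) • ((-(2 * 1) / (2 * y 0) ^ 2) • prj 0)
            + ((2 * y 0)⁻¹) • (((2:ℕ) * y k ^ (2-1)) • prj k)) y := by
    intro k _
    have hd : HasDerivAt (fun t : ℝ => (2 * t)⁻¹) (-(2 * 1) / (2 * y 0) ^ 2) (y 0) :=
      ((hasDerivAt_id (y 0)).const_mul 2).inv (by positivity)
    exact ((hasDerivAt_pow 2 (y k)).comp_hasFDerivAt y (hP y k)).mul
      (hd.comp_hasFDerivAt y (hP y 0))
  have hfun : tf n = fun z : Fin n → ℝ =>
      -(1/4) * Real.log (z 0) + ∑ k ∈ univ \ {0}, (z k) ^ 2 * (2 * z 0)⁻¹ := by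
    funext z; simp [tf, div_eq_mul_inv]
  rw [hfun]
  exact h1.add (HasFDerivAt.fun_sum h2)

lemma pd_tf (j : Fin n) (y : Fin n → ℝ) (hy : 0 < y 0) :
    pd n j (tf n) y =
      if j = 0 then -(1/4) / y 0 - (∑ k ∈ univ \ {0}, (y k) ^ 2) / (2 * (y 0) ^ 2)
      else y j / y 0 := by
  have hy0 : y 0 ≠ 0 := hy.ne'
  rw [pd, (tf_hasFDerivAt y hy).fderiv]
  simp only [ContinuousLinearMap.add_apply, ContinuousLinearMap.smul_apply,
    ContinuousLinearMap.coe_sum', Finset.sum_apply, ContinuousLinearMap.proj_apply,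
    Pi.single_apply, smul_eq_mul, Finset.sum_add_distrib, mul_ite, ite_mul, mul_zero,
    zero_mul, mul_one, Finset.sum_ite_eq', Finset.mem_sdiff, Finset.mem_univ,
    Finset.mem_singleton, true_and]
  by_cases hj : j = 0
  · subst hj
    simp only [if_pos rfl, not_true, if_false, if_true, add_zero, Finset.sum_const_zero]
    rw [← Finset.sum_mul]
    field_simp
    ring
  · simp only [if_neg hj, if_neg (Ne.symm hj), hj, not_false_iff, if_true, zero_add,
      Finset.sum_const_zero, add_zero, if_false]
    field_simp
    ring

/-- Explicit first partials of `tf`. -/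
def G (n : ℕ) [NeZero n] (j : Fin n) (y : Fin n → ℝ) : ℝ :=
  if j = 0 then -(1/4) / y 0 - (∑ k ∈ univ \ {0}, (y k) ^ 2) / (2 * (y 0) ^ 2)
  else y j / y 0

/-- Explicit Hessian of `tf`. -/
def Mmat (n : ℕ) [NeZero n] (y : Fin n → ℝ) : Matrix (Fin n) (Fin n) ℝ := fun i j =>
  if i = 0 then
    (if j = 0 then 1 / (4 * (y 0) ^ 2) + (∑ k ∈ univ \ {0}, (y k) ^ 2) / ((y 0) ^ 3)
     else -(y j) / (y 0) ^ 2)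
  else if j = 0 then -(y i) / (y 0) ^ 2
  else if i = j then (y 0)⁻¹ else 0

lemma pd_G (i j : Fin n) (y : Fin n → ℝ) (hy : 0 < y 0) :
    pd n i (G n j) y = Mmat n y i j := by
  have hy0 : y 0 ≠ 0 := hy.ne'
  by_cases hj : j = 0
  · subst hj
    have hfun : G n (0 : Fin n) = fun z : Fin n → ℝ =>
        -(1/4) * (z 0)⁻¹ - (∑ k ∈ univ \ {0}, (z k) ^ 2) * (2 * (z 0) ^ 2)⁻¹ := by
      funext z; simp [G, div_eq_mul_inv]
    have hs : HasFDerivAt (fun z : Fin n → ℝ => ∑ k ∈ univ \ ({0} : Finset (Fin n)), (z k) ^ 2)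
        (∑ k ∈ univ \ ({0} : Finset (Fin n)), ((2:ℕ) * y k ^ (2-1)) • prj k) y :=
      HasFDerivAt.fun_sum fun k _ => by have h3 := (hasDerivAt_pow 2 (y k)).comp_hasFDerivAt y (hP y k); exact h3
    have hinv : HasDerivAt (fun t : ℝ => (2 * t ^ 2)⁻¹)
        (-(2 * ((2:ℕ) * y 0 ^ (2-1))) / (2 * y 0 ^ 2) ^ 2) (y 0) :=
      (((hasDerivAt_pow 2 (y 0)).const_mul 2)).inv (by positivity)
    have h1 : HasFDerivAt (fun z : Fin n → ℝ => -(1/4) * (z 0)⁻¹)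
        ((-(1/4) : ℝ) • ((-((y 0) ^ 2)⁻¹) • prj 0)) y :=
      HasFDerivAt.const_mul ((hasDerivAt_inv hy0).comp_hasFDerivAt y (hP y 0)) _
    have h2 : HasFDerivAt (fun z : Fin n → ℝ => (∑ k ∈ univ \ {0}, (z k) ^ 2) * (2 * (z 0) ^ 2)⁻¹)
        ((∑ k ∈ univ \ {0}, (y k) ^ 2) • ((-(2 * ((2:ℕ) * y 0 ^ (2-1))) / (2 * y 0 ^ 2) ^ 2) • prj 0) +
          ((2 * (y 0) ^ 2)⁻¹) • ∑ k ∈ univ \ ({0} : Finset (Fin n)), ((2:ℕ) * y k ^ (2-1)) • prj k) y :=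
      by have h3 := hinv.comp_hasFDerivAt y (hP y 0); exact hs.mul h3
    have H := h1.fun_sub h2
    rw [pd, hfun, H.fderiv]
    simp only [ContinuousLinearMap.sub_apply, ContinuousLinearMap.add_apply,
      ContinuousLinearMap.smul_apply, ContinuousLinearMap.coe_sum', Finset.sum_apply,
      ContinuousLinearMap.proj_apply, Pi.single_apply, smul_eq_mul, Finset.sum_add_distrib,
      mul_ite, ite_mul, mul_zero, zero_mul, mul_one, Finset.sum_ite_eq', Finset.mem_sdiff,
      Finset.mem_univ, Finset.mem_singleton, true_and, Mmat]
    by_cases hi : i = 0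
    · subst hi
      simp only [if_pos rfl, if_true, not_true_eq_false, ↓reduceIte]
      push_cast
      field_simp
      ring
    · have h0i : ¬ (0:Fin n) = i := fun h => hi h.symm
      simp only [if_neg h0i, if_neg hi, if_false]
      push_cast
      field_simp
      rw [if_pos hi]
      field_simp
      ring
  · have hfun : G n j = fun z : Fin n → ℝ => z j * (z 0)⁻¹ := by
      funext z; simp [G, hj, div_eq_mul_inv]
    have H : HasFDerivAt (fun z : Fin n → ℝ => z j * (z 0)⁻¹)
        ((y j) • ((-((y 0) ^ 2)⁻¹) • prj 0) + ((y 0)⁻¹) • prj j) y :=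
      (hP y j).mul ((hasDerivAt_inv hy0).comp_hasFDerivAt y (hP y 0))
    rw [pd, hfun, H.fderiv]
    simp only [ContinuousLinearMap.add_apply, ContinuousLinearMap.smul_apply,
      ContinuousLinearMap.proj_apply, Pi.single_apply, smul_eq_mul, Mmat,
      if_neg hj]
    by_cases hi : i = 0
    · subst hi
      simp only [if_pos rfl, if_neg (fun h : (0:Fin n) = j => hj (h.symm)), if_neg hj,
        mul_zero, add_zero, mul_one, mul_ite]
      field_simp
    · simp only [if_neg hi, if_neg (fun h : (0:Fin n) = i => hi (h.symm)), mul_zero, zero_add]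
      by_cases hij : i = j
      · subst hij; simp
      · simp [if_neg (fun h : j = i => hij h.symm), hij]

lemma isOpen_dom : IsOpen {y : Fin n → ℝ | 0 < y 0} :=
  isOpen_lt continuous_const (continuous_apply 0)

lemma hess_eq (y : Fin n → ℝ) (hy : 0 < y 0) : Hess n (tf n) y = Mmat n y := by
  funext i j
  have hev : pd n j (tf n) =ᶠ[nhds y] G n j := by
    filter_upwards [isOpen_dom.mem_nhds hy] with z hz
    exact pd_tf j z hz
  show pd n i (pd n j (tf n)) y = _
  rw [pd, hev.fderiv_eq, ← pd]
  exact pd_G i j y hy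

def Amat (n : ℕ) [NeZero n] (y : Fin n → ℝ) : Matrix (Fin n) (Fin n) ℝ := fun i j =>
  if j = 0 then (if i = 0 then 1 else -(y i) / y 0) else (if i = j then 1 else 0)

def dvec (n : ℕ) [NeZero n] (y : Fin n → ℝ) : Fin n → ℝ := fun k =>
  if k = 0 then 1 / (4 * (y 0) ^ 2) else (y 0)⁻¹

lemma mem_diff0 {k : Fin n} (hk : k ∈ univ \ ({0} : Finset (Fin n))) : k ≠ 0 := by
  simpa using (Finset.mem_sdiff.mp hk).2

lemma M_factor (y : Fin n → ℝ) (hy : 0 < y 0) :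
    Mmat n y = (Amat n y)ᵀ * (Matrix.diagonal (dvec n y) * Amat n y) := by
  have hy0 : y 0 ≠ 0 := hy.ne'
  funext i j
  rw [Matrix.mul_apply]
  simp only [Matrix.transpose_apply, Matrix.diagonal_mul]
  rw [Finset.sum_eq_sum_sdiff_singleton_add (Finset.mem_univ (0 : Fin n))]
  by_cases hi : i = 0 <;> by_cases hj : j = 0
  · subst hi; subst hj
    have hsum : (∑ k ∈ univ \ ({0} : Finset (Fin n)),
        Amat n y k 0 * (dvec n y k * Amat n y k 0))
        = ∑ k ∈ univ \ ({0} : Finset (Fin n)), (y k) ^ 2 / (y 0) ^ 3 :=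
      Finset.sum_congr rfl fun k hk => by
        have hk0 : k ≠ 0 := mem_diff0 hk
        simp only [Amat, dvec, if_neg hk0, if_pos rfl, ↓reduceIte]
        field_simp
    rw [hsum, ← Finset.sum_div]
    simp only [Mmat, Amat, dvec, if_pos rfl, if_true, eq_self_iff_true]
    field_simp
    ring
  · subst hi
    have hsum : (∑ k ∈ univ \ ({0} : Finset (Fin n)),
        Amat n y k 0 * (dvec n y k * Amat n y k j))
        = ∑ k ∈ univ \ ({0} : Finset (Fin n)), (if k = j then -(y j) / (y 0) ^ 2 else 0) :=
      Finset.sum_congr rfl fun k hk => by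
        have hk0 : k ≠ 0 := mem_diff0 hk
        simp only [Amat, dvec, if_neg hk0, if_pos rfl, if_neg hj]
        by_cases hkj : k = j
        · subst hkj; simp only [if_pos rfl, if_true, eq_self_iff_true, mul_one]; ring
        · simp [hkj]
    rw [hsum, Finset.sum_ite_eq' (univ \ ({0} : Finset (Fin n))) j
      (fun _ => -(y j) / (y 0) ^ 2)]
    simp [Mmat, Amat, dvec, hj, (Ne.symm hj : (0:Fin n) ≠ j)]
  · subst hj
    have hsum : (∑ k ∈ univ \ ({0} : Finset (Fin n)),
        Amat n y k i * (dvec n y k * Amat n y k 0))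
        = ∑ k ∈ univ \ ({0} : Finset (Fin n)), (if k = i then -(y i) / (y 0) ^ 2 else 0) :=
      Finset.sum_congr rfl fun k hk => by
        have hk0 : k ≠ 0 := mem_diff0 hk
        simp only [Amat, dvec, if_neg hk0, if_pos rfl, if_neg hi]
        by_cases hki : k = i
        · subst hki; simp only [if_pos rfl, if_true, eq_self_iff_true, one_mul]; ring
        · simp [hki]
    rw [hsum, Finset.sum_ite_eq' (univ \ ({0} : Finset (Fin n))) i
      (fun _ => -(y i) / (y 0) ^ 2)]
    simp [Mmat, Amat, dvec, hi, (Ne.symm hi : (0:Fin n) ≠ i)]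
  · have hsum : (∑ k ∈ univ \ ({0} : Finset (Fin n)),
        Amat n y k i * (dvec n y k * Amat n y k j))
        = ∑ k ∈ univ \ ({0} : Finset (Fin n)),
            (if k = i then (if i = j then (y 0)⁻¹ else 0) else 0) :=
      Finset.sum_congr rfl fun k hk => by
        have hk0 : k ≠ 0 := mem_diff0 hk
        simp only [Amat, dvec, if_neg hk0, if_neg hi, if_neg hj]
        by_cases hki : k = i
        · subst hki
          by_cases hkj : k = j
          · subst hkj; simp
          · simp [hkj]
        · simp [hki]
    rw [hsum, Finset.sum_ite_eq' (univ \ ({0} : Finset (Fin n))) i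
      (fun _ => if i = j then (y 0)⁻¹ else 0)]
    simp [Mmat, Amat, dvec, hi, hj, (Ne.symm hi : (0:Fin n) ≠ i), (Ne.symm hj : (0:Fin n) ≠ j)]

lemma det_Amat (y : Fin n → ℝ) : (Amat n y).det = 1 := by
  rw [Matrix.det_of_lowerTriangular (Amat n y) ?ht]
  case ht =>
    intro i j hij
    have hlt : i < j := hij
    have hj0 : j ≠ 0 := by
      rintro rfl
      exact absurd (Fin.lt_def.mp hlt) (by simp)
    have hij' : i ≠ j := ne_of_lt hlt
    simp [Amat, hj0, hij']
  rw [Finset.prod_eq_one]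
  intro i _
  by_cases hi : i = 0 <;> simp [Amat, hi]

lemma det_Mmat (y : Fin n → ℝ) (hy : 0 < y 0) :
    (Mmat n y).det = 1 / (4 * (y 0) ^ (n + 1)) := by
  have hy0 : y 0 ≠ 0 := hy.ne'
  have h1 : ∏ k ∈ univ \ ({0} : Finset (Fin n)), dvec n y k = (y 0)⁻¹ ^ (n - 1) := by
    calc ∏ k ∈ univ \ ({0} : Finset (Fin n)), dvec n y k
        = ∏ _k ∈ univ \ ({0} : Finset (Fin n)), (y 0)⁻¹ :=
          Finset.prod_congr rfl fun k hk => by simp [dvec, mem_diff0 hk]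
      _ = (y 0)⁻¹ ^ (n - 1) := by
          rw [Finset.prod_const]
          congr 1
          simp [Finset.card_sdiff, Finset.card_univ]
  rw [M_factor y hy, Matrix.det_mul, Matrix.det_mul, Matrix.det_transpose, det_Amat,
    Matrix.det_diagonal, Finset.prod_eq_prod_diff_singleton_mul (Finset.mem_univ (0 : Fin n)),
    h1]
  have hn1 : n - 1 + 2 = n + 1 := by
    have := Nat.pos_of_ne_zero (NeZero.ne n); omega
  rw [dvec, if_pos rfl, ← hn1, pow_add]
  field_simp
  ring
  rw [← mul_pow, mul_inv_cancel₀ hy0, one_pow]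

def Bmat (n : ℕ) [NeZero n] (y : Fin n → ℝ) : Matrix (Fin n) (Fin n) ℝ := fun i j =>
  if i = 0 then (if j = 0 then 4 * (y 0) ^ 2 else 4 * y 0 * y j)
  else if j = 0 then 4 * y 0 * y i
  else (if i = j then y 0 else 0) + 4 * y i * y j

lemma M_mul_B (y : Fin n → ℝ) (hy : 0 < y 0) : Mmat n y * Bmat n y = 1 := by
  have hy0 : y 0 ≠ 0 := hy.ne'
  funext i j
  rw [Matrix.mul_apply, Finset.sum_eq_sum_sdiff_singleton_add (Finset.mem_univ (0 : Fin n))]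
  by_cases hi : i = 0 <;> by_cases hj : j = 0
  · subst hi; subst hj
    have hsum : (∑ k ∈ univ \ ({0} : Finset (Fin n)), Mmat n y 0 k * Bmat n y k 0)
        = ∑ k ∈ univ \ ({0} : Finset (Fin n)), (-(4 / y 0)) * (y k) ^ 2 :=
      Finset.sum_congr rfl fun k hk => by
        have hk0 : k ≠ 0 := mem_diff0 hk
        simp only [Mmat, Bmat, if_pos rfl, if_true, eq_self_iff_true, if_neg hk0]
        field_simp
    rw [hsum, ← Finset.mul_sum]
    simp only [Mmat, Bmat, if_pos rfl, if_true, eq_self_iff_true, Matrix.one_apply_eq]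
    field_simp
    ring
  · subst hi
    have hsum : (∑ k ∈ univ \ ({0} : Finset (Fin n)), Mmat n y 0 k * Bmat n y k j)
        = ∑ k ∈ univ \ ({0} : Finset (Fin n)),
            ((if k = j then -(y j) / y 0 else 0) + (-(4 * y j / (y 0) ^ 2)) * (y k) ^ 2) :=
      Finset.sum_congr rfl fun k hk => by
        have hk0 : k ≠ 0 := mem_diff0 hk
        simp only [Mmat, Bmat, if_pos rfl, if_true, eq_self_iff_true, if_neg hk0, if_neg hj]
        by_cases hkj : k = j
        · subst hkj; simp only [if_pos rfl, ↓reduceIte]; field_simp; ring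
        · simp only [if_neg hkj]; field_simp; ring
    rw [hsum, Finset.sum_add_distrib, ← Finset.mul_sum,
      Finset.sum_ite_eq' (univ \ ({0} : Finset (Fin n))) j (fun _ => -(y j) / y 0)]
    simp only [Mmat, Bmat, if_pos rfl, if_true, eq_self_iff_true, if_neg hj,
      Finset.mem_sdiff, Finset.mem_univ, Finset.mem_singleton, hj, not_false_iff, true_and,
      if_true, Matrix.one_apply_ne (Ne.symm (hj : j ≠ 0) : (0:Fin n) ≠ j), ↓reduceIte]
    field_simp
    ring
  · subst hj
    have hsum : (∑ k ∈ univ \ ({0} : Finset (Fin n)), Mmat n y i k * Bmat n y k 0)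
        = ∑ k ∈ univ \ ({0} : Finset (Fin n)), (if k = i then 4 * y i else 0) :=
      Finset.sum_congr rfl fun k hk => by
        have hk0 : k ≠ 0 := mem_diff0 hk
        simp only [Mmat, Bmat, if_neg hi, if_neg hk0, if_pos rfl, if_true, eq_self_iff_true]
        by_cases hki : k = i
        · subst hki; simp only [if_pos rfl, if_pos rfl, ↓reduceIte]; field_simp
        · simp only [if_neg hki, if_neg (fun h : i = k => hki h.symm), zero_mul]
    rw [hsum, Finset.sum_ite_eq' (univ \ ({0} : Finset (Fin n))) i (fun _ => 4 * y i)]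
    simp only [Mmat, Bmat, if_neg hi, if_pos rfl, if_true, eq_self_iff_true,
      Finset.mem_sdiff, Finset.mem_univ, Finset.mem_singleton, hi, not_false_iff, true_and,
      if_true, Matrix.one_apply_ne (hi : i ≠ 0), ↓reduceIte]
    field_simp
    ring
  · have hsum : (∑ k ∈ univ \ ({0} : Finset (Fin n)), Mmat n y i k * Bmat n y k j)
        = ∑ k ∈ univ \ ({0} : Finset (Fin n)),
            (if k = i then ((if i = j then 1 else 0) + 4 * y i * y j / y 0) else 0) :=
      Finset.sum_congr rfl fun k hk => by
        have hk0 : k ≠ 0 := mem_diff0 hk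
        simp only [Mmat, Bmat, if_neg hi, if_neg hj, if_neg hk0]
        by_cases hki : k = i
        · subst hki
          simp only [if_pos rfl, if_pos rfl]
          by_cases hkj : k = j
          · subst hkj; simp only [if_pos rfl, if_true, eq_self_iff_true]; field_simp
          · simp only [if_neg hkj, if_neg (fun h : k = j => hkj h), zero_add, ↓reduceIte]; field_simp
        · simp only [if_neg hki, if_neg (fun h : i = k => hki h.symm), zero_mul]
    rw [hsum, Finset.sum_ite_eq' (univ \ ({0} : Finset (Fin n))) i
      (fun _ => (if i = j then (1:ℝ) else 0) + 4 * y i * y j / y 0)]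
    simp only [Mmat, Bmat, if_neg hi, if_neg hj, if_neg (fun h : (0:Fin n) = j => hj h.symm),
      Finset.mem_sdiff, Finset.mem_univ, Finset.mem_singleton, hi, not_false_iff, true_and,
      if_true, Matrix.one_apply, ↓reduceIte]
    by_cases hij : i = j
    · subst hij; simp only [if_pos rfl, ↓reduceIte]; field_simp; ring
    · simp only [if_neg hij]; field_simp
      ring

lemma W_eq (a : ℝ) (z : Fin n → ℝ) (hz : 0 < z 0) :
    (Hess n (tf n) z).det ^ a
      = (4:ℝ) ^ (-a) * (z 0) ^ (((n:ℝ) + 1) * (-a)) := by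
  rw [hess_eq z hz, det_Mmat z hz, one_div,
    Real.inv_rpow (by positivity), ← Real.rpow_neg (by positivity),
    Real.mul_rpow (by norm_num) (by positivity),
    ← Real.rpow_natCast (z 0) (n + 1), ← Real.rpow_mul hz.le]
  push_cast
  ring_nf

lemma pd_W (a : ℝ) (j : Fin n) (y : Fin n → ℝ) (hy : 0 < y 0) :
    pd n j (fun z => (Hess n (tf n) z).det ^ a) y
      = if j = 0 then
          (4:ℝ) ^ (-a) * (((n:ℝ) + 1) * (-a)) * (y 0) ^ (((n:ℝ) + 1) * (-a) - 1)
        else 0 := by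
  set C : ℝ := (4:ℝ) ^ (-a)
  set β : ℝ := ((n:ℝ) + 1) * (-a)
  have hev : (fun z => (Hess n (tf n) z).det ^ a) =ᶠ[nhds y]
      (fun z : Fin n → ℝ => C * (z 0) ^ β) := by
    filter_upwards [isOpen_dom.mem_nhds hy] with z hz
    exact W_eq a z hz
  have H : HasFDerivAt (fun z : Fin n → ℝ => C * (z 0) ^ β)
      (C • ((β * (y 0) ^ (β - 1)) • prj 0)) y :=
    by have h3 := (Real.hasDerivAt_rpow_const (p := β) (Or.inl hy.ne')).comp_hasFDerivAt y (hP y 0)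
       exact h3.const_mul C
  rw [pd, hev.fderiv_eq, H.fderiv]
  simp only [ContinuousLinearMap.smul_apply, ContinuousLinearMap.proj_apply,
    Pi.single_apply, smul_eq_mul]
  by_cases hj : j = 0
  · subst hj; simp only [if_pos rfl, if_true, eq_self_iff_true, mul_one]; ring
  · simp [if_neg (fun h : (0:Fin n) = j => hj h.symm), hj]

lemma pd_pd_W (a : ℝ) (i j : Fin n) (y : Fin n → ℝ) (hy : 0 < y 0) :
    pd n i (pd n j (fun z => (Hess n (tf n) z).det ^ a)) y
      = if i = 0 ∧ j = 0 then
          (4:ℝ) ^ (-a) * (((n:ℝ) + 1) * (-a)) * (((n:ℝ) + 1) * (-a) - 1)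
            * (y 0) ^ (((n:ℝ) + 1) * (-a) - 1 - 1)
        else 0 := by
  set C : ℝ := (4:ℝ) ^ (-a)
  set β : ℝ := ((n:ℝ) + 1) * (-a)
  by_cases hj : j = 0
  · subst hj
    have hev : pd n 0 (fun z => (Hess n (tf n) z).det ^ a) =ᶠ[nhds y]
        (fun z : Fin n → ℝ => (C * β) * (z 0) ^ (β - 1)) := by
      filter_upwards [isOpen_dom.mem_nhds hy] with z hz
      rw [pd_W a 0 z hz]
      simp only [if_pos rfl, if_true, eq_self_iff_true]
      rfl
    have H : HasFDerivAt (fun z : Fin n → ℝ => (C * β) * (z 0) ^ (β - 1))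
        ((C * β) • (((β - 1) * (y 0) ^ (β - 1 - 1)) • prj 0)) y :=
      by have h3 := (Real.hasDerivAt_rpow_const (p := β - 1) (Or.inl hy.ne')).comp_hasFDerivAt y (hP y 0)
         exact h3.const_mul (C * β)
    rw [pd, hev.fderiv_eq, H.fderiv]
    simp only [ContinuousLinearMap.smul_apply, ContinuousLinearMap.proj_apply,
      Pi.single_apply, smul_eq_mul]
    by_cases hi : i = 0
    · subst hi; simp only [if_pos rfl, and_self, if_true, eq_self_iff_true, mul_one]; ring
    · simp [if_neg (fun h : (0:Fin n) = i => hi h.symm), hi]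
  · have hev : pd n j (fun z => (Hess n (tf n) z).det ^ a) =ᶠ[nhds y]
        (fun _ : Fin n → ℝ => (0:ℝ)) := by
      filter_upwards [isOpen_dom.mem_nhds hy] with z hz
      rw [pd_W a j z hz, if_neg hj]
    rw [pd, hev.fderiv_eq]
    simp [hj, fderiv_const]

end Aux

/-- for `a ≠ 0`, `∑ f̃^{ij} ∂ᵢ∂ⱼ(D̃ᵃ) = 0` on `{y₁ > 0}` iff `a = -1/(n+1)`. -/
theorem tf_affine_maximal_iff (n : ℕ) [NeZero n] (hn : 2 ≤ n) (a : ℝ) (ha : a ≠ 0) :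
    (∀ y : Fin n → ℝ, 0 < y 0 →
      ∑ i, ∑ j, (Hess n (tf n) y)⁻¹ i j *
          pd n i (pd n j (fun z => (Hess n (tf n) z).det ^ a)) y = 0) ↔
    a = -(1 : ℝ)/(n + 1) := by
  have hC : (0:ℝ) < (4:ℝ) ^ (-a) := Real.rpow_pos_of_pos (by norm_num) _
  have hn1 : ((n:ℝ) + 1) ≠ 0 := by positivity
  have hβ : ((n:ℝ) + 1) * (-a) ≠ 0 := mul_ne_zero hn1 (neg_ne_zero.mpr ha)
  have hterm : ∀ y : Fin n → ℝ, 0 < y 0 →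
      (∑ i, ∑ j, (Hess n (tf n) y)⁻¹ i j *
          pd n i (pd n j (fun z => (Hess n (tf n) z).det ^ a)) y)
        = 4 * (y 0) ^ 2 * ((4:ℝ) ^ (-a) * (((n:ℝ) + 1) * (-a)) * (((n:ℝ) + 1) * (-a) - 1)
            * (y 0) ^ (((n:ℝ) + 1) * (-a) - 1 - 1)) := by
    intro y hy
    have hInv : (Hess n (tf n) y)⁻¹ = Bmat n y := by
      rw [hess_eq y hy]; exact Matrix.inv_eq_right_inv (M_mul_B y hy)
    rw [hInv, Finset.sum_eq_single (0 : Fin n) ?h1 (by simp),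
      Finset.sum_eq_single (0 : Fin n) ?h3 (by simp), pd_pd_W a 0 0 y hy]
    case h1 =>
      intro i _ hi
      apply Finset.sum_eq_zero
      intro j _
      rw [pd_pd_W a i j y hy, if_neg (by tauto)]
      exact mul_zero _
    case h3 =>
      intro j _ hj
      rw [pd_pd_W a 0 j y hy, if_neg (by tauto)]
      exact mul_zero _
    simp only [if_pos (And.intro rfl rfl), Bmat, if_pos rfl, if_true, eq_self_iff_true,
      and_self]
  constructor
  · intro h
    have h1 := hterm (fun _ => (1:ℝ)) (by norm_num)
    rw [h (fun _ => (1:ℝ)) (by norm_num)] at h1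
    simp only [Real.one_rpow, one_pow, mul_one] at h1
    have h2 : ((n:ℝ) + 1) * (-a) - 1 = 0 := by
      rcases mul_eq_zero.mp h1.symm with h' | h'
      · norm_num at h'
      · rcases mul_eq_zero.mp h' with h'' | h''
        · rcases mul_eq_zero.mp h'' with h3 | h3
          · exact absurd h3 hC.ne'
          · exact absurd h3 hβ
        · exact h''
    rw [eq_div_iff hn1]
    linear_combination -h2
  · intro h y hy
    rw [hterm y hy]
    have h2 : ((n:ℝ) + 1) * (-a) - 1 = 0 := by
      rw [h]; field_simp; norm_num
    rw [h2]
    simp
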